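/- arXiv:cs/0609002 — 2 statements merged into one kernel-verified Lean document; each statement's English description precedes it below -/
import Mathlib

section
/- The set of weakly beta-normalizing terms is closed under ≻: if s is weakly beta-normalizing and s ≻ t, then t is weakly beta-normalizing. -/
/-!
Head steps are beta steps, and weak normalization is preserved along beta reduction because beta
reduction is confluent (Tait–Martin-Löf parallel reduction, whose diamonds are closed by Takahashi's
complete development `Tm.develop`).

For the other clause, a term whose spine has a variable or constant head can only reduce inside its
arguments, and keeps that shape; so the normal form of `λx⃗. v a₀ … aₙ` is some `λx⃗. v b₀ … bₙ`
with `aᵢ ↠ bᵢ` and every `bᵢ` normal. Finally, renaming commutes with substitution, so it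
preserves beta steps and reflects redexes, hence preserves weak normalization.
-/

namespace CondConf

/-- Untyped lambda-terms with constants from `F`, in de Bruijn notation. -/
inductive Tm (F : Type) : Type
  | const : F → Tm F
  | var   : ℕ → Tm F
  | app   : Tm F → Tm F → Tm F
  | lam   : Tm F → Tm F

namespace Tm

variable {F : Type}

/-- Lift (shift) free de Bruijn indices `≥ d` by one. -/
def lift (d : ℕ) : Tm F → Tm F
  | const f => const f
  | var n   => if n < d then var n else var (n + 1)
  | app s t => app (lift d s) (lift d t)
  | lam s   => lam (lift (d + 1) s)

/-- Capture-avoiding substitution `t[k := u]` (de Bruijn). -/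
def subst : Tm F → ℕ → Tm F → Tm F
  | const f, _, _ => const f
  | var n, k, u   => if n = k then u else if k < n then var (n - 1) else var n
  | app s t, k, u => app (subst s k u) (subst t k u)
  | lam s, k, u   => lam (subst s (k + 1) (lift 0 u))

end Tm

/-- Capture-avoiding application of a substitution `σ` to a term. -/
def applySubst {F : Type} (σ : ℕ → Tm F) : Tm F → Tm F
  | .const f => .const f
  | .var n   => σ n
  | .app s t => .app (applySubst σ s) (applySubst σ t)
  | .lam s   => .lam (applySubst (fun n => match n with
      | 0 => Tm.var 0
      | m + 1 => Tm.lift 0 (σ m)) s)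

/-- One-step beta-reduction. -/
inductive Beta {F : Type} : Tm F → Tm F → Prop
  | beta (s t : Tm F) : Beta (Tm.app (Tm.lam s) t) (Tm.subst s 0 t)
  | appL {s s'} (t) : Beta s s' → Beta (Tm.app s t) (Tm.app s' t)
  | appR (s) {t t'} : Beta t t' → Beta (Tm.app s t) (Tm.app s t')
  | lam {s s'} : Beta s s' → Beta (Tm.lam s) (Tm.lam s')

/-- Tait–Martin-Löf parallel beta-reduction. -/
inductive PB {F : Type} : Tm F → Tm F → Prop
  | refl (t : Tm F) : PB t t
  | lam {s s'} : PB s s' → PB (Tm.lam s) (Tm.lam s')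
  | app {s s' t t'} : PB s s' → PB t t' → PB (Tm.app s t) (Tm.app s' t')
  | beta {s s' t t'} : PB s s' → PB t t' →
      PB (Tm.app (Tm.lam s) t) (Tm.subst s' 0 t')


/-- One-step head beta-reduction: contracts the head redex
`λx⃗.(λy.b) a₀ a⃗ →h λx⃗.b[y:=a₀] a⃗`. -/
inductive Head {F : Type} : Tm F → Tm F → Prop
  | beta (s t : Tm F) : Head (Tm.app (Tm.lam s) t) (Tm.subst s 0 t)
  | app {s s'} (t) : Head s s' → (∀ b : Tm F, s ≠ Tm.lam b) →
      Head (Tm.app s t) (Tm.app s' t)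
  | lam {s s'} : Head s s' → Head (Tm.lam s) (Tm.lam s')

/-- Head of the application spine. -/
def spineHead {F : Type} : Tm F → Tm F
  | .app s _ => spineHead s
  | t => t

/-- Arguments of the application spine. -/
def spineArgs {F : Type} : Tm F → List (Tm F)
  | .app s t => spineArgs s ++ [t]
  | _ => []

/-- Strip the outer abstractions `λx⃗`. -/
def stripLam {F : Type} : Tm F → Tm F
  | .lam s => stripLam s
  | t => t

/-- `t'` is obtained from `t` by renaming its (de Bruijn) variables; this
accounts for the fact that the free variables of an argument may be bound in
the surrounding term (e.g. `λx. f x ≻ y` for every variable `y`). -/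
def Renaming {F : Type} (t t' : Tm F) : Prop :=
  ∃ ρ : ℕ → ℕ, t' = applySubst (fun n => Tm.var (ρ n)) t

/-- The relation `≻`: either a head beta-step, or passing (up to renaming of
variables) to one of the arguments `aᵢ` of `s = λx⃗. v a₀ … aₙ` where the head
`v` is a variable or a constant and there is at least one argument. -/
inductive Succ {F : Type} : Tm F → Tm F → Prop
  | head {s t : Tm F} : Head s t → Succ s t
  | arg {s a t : Tm F} :
      ((∃ n : ℕ, spineHead (stripLam s) = Tm.var n) ∨
        (∃ f : F, spineHead (stripLam s) = Tm.const f)) →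
      a ∈ spineArgs (stripLam s) →
      1 ≤ (spineArgs (stripLam s)).length →
      Renaming a t → Succ s t

/-- Beta-normal forms. -/
def BetaNF {F : Type} (t : Tm F) : Prop := ∀ u : Tm F, ¬ Beta t u

/-- Weakly beta-normalizing terms: terms having a beta-normal form. -/
def WN {F : Type} (s : Tm F) : Prop :=
  ∃ t : Tm F, Relation.ReflTransGen Beta s t ∧ BetaNF t

open Relation

variable {F : Type}

namespace Tm

attribute [local simp] lift subst

theorem lift_lift (t : Tm F) {i j : ℕ} (h : i ≤ j) :
    lift i (lift j t) = lift (j + 1) (lift i t) := by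
  induction t generalizing i j with
  | const f => rfl
  | var n => grind [lift]
  | app s t ihs iht => simp [ihs h, iht h]
  | lam s ih => simp [ih (Nat.succ_le_succ h)]

theorem subst_lift (u w : Tm F) (k : ℕ) : subst (lift k u) k w = u := by
  induction u generalizing k w with
  | const f => rfl
  | var n => grind [subst, lift]
  | app s t ihs iht => simp [ihs, iht]
  | lam s ih => simp [ih]

theorem lift_subst_of_le (s u : Tm F) {k d : ℕ} (h : k ≤ d) :
    lift d (subst s k u) = subst (lift (d + 1) s) k (lift d u) := by
  induction s generalizing u k d with
  | const f => rfl
  | var n => grind [subst, lift]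
  | app s t ihs iht => simp [ihs u h, iht u h]
  | lam s ih => simp [ih (lift 0 u) (Nat.succ_le_succ h), lift_lift u (Nat.zero_le d)]

theorem lift_subst_of_ge (s u : Tm F) {d k : ℕ} (h : d ≤ k) :
    lift d (subst s k u) = subst (lift d s) (k + 1) (lift d u) := by
  induction s generalizing u d k with
  | const f => rfl
  | var n => grind [subst, lift]
  | app s t ihs iht => simp [ihs u h, iht u h]
  | lam s ih => simp [ih (lift 0 u) (Nat.succ_le_succ h), lift_lift u (Nat.zero_le d)]

theorem subst_subst (s t u : Tm F) {j k : ℕ} (h : j ≤ k) :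
    subst (subst s j t) k u = subst (subst s (k + 1) (lift j u)) j (subst t k u) := by
  induction s generalizing t u j k with
  | const f => rfl
  | var n => grind [subst, subst_lift]
  | app s₁ s₂ ih₁ ih₂ => simp [ih₁ t u h, ih₂ t u h]
  | lam s ih =>
    simp [ih (lift 0 t) (lift 0 u) (Nat.succ_le_succ h), lift_lift u (Nat.zero_le j),
      lift_subst_of_ge t u (Nat.zero_le k)]

end Tm

open Tm

namespace PB

theorem lift {s t : Tm F} (h : PB s t) (d : ℕ) : PB (lift d s) (lift d t) := by
  induction h generalizing d with
  | refl t => exact refl _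
  | lam _ ih => exact lam (ih (d + 1))
  | app _ _ ih₁ ih₂ => exact app (ih₁ d) (ih₂ d)
  | @beta s s' t t' _ _ ih₁ ih₂ =>
    rw [lift_subst_of_le s' t' (Nat.zero_le d)]
    exact beta (ih₁ (d + 1)) (ih₂ d)

theorem subst_right (s : Tm F) {u u' : Tm F} (h : PB u u') (k : ℕ) :
    PB (subst s k u) (subst s k u') := by
  induction s generalizing u u' k with
  | const f => exact refl _
  | var n =>
    simp only [Tm.subst]
    split_ifs
    exacts [h, refl _, refl _]
  | app s t ihs iht => exact app (ihs h k) (iht h k)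
  | lam s ih => exact lam (ih (h.lift 0) (k + 1))

theorem subst {s s' u u' : Tm F} (hs : PB s s') (hu : PB u u') (k : ℕ) :
    PB (subst s k u) (subst s' k u') := by
  induction hs generalizing u u' k with
  | refl s => exact subst_right s hu k
  | lam _ ih => exact lam (ih (hu.lift 0) (k + 1))
  | app _ _ ih₁ ih₂ => exact app (ih₁ hu k) (ih₂ hu k)
  | @beta a a' b b' _ _ ih₁ ih₂ =>
    rw [subst_subst a' b' u' (Nat.zero_le k)]
    exact beta (ih₁ (hu.lift 0) (k + 1)) (ih₂ hu k)

theorem of_beta {s t : Tm F} (h : Beta s t) : PB s t := by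
  induction h with
  | beta s t => exact beta (refl s) (refl t)
  | appL t _ ih => exact app ih (refl t)
  | appR s _ ih => exact app (refl s) ih
  | lam _ ih => exact lam ih

theorem reflTransGen_beta {s t : Tm F} (h : PB s t) : ReflTransGen Beta s t := by
  have congr_beta (f : Tm F → Tm F) (hf : ∀ a b, Beta a b → Beta (f a) (f b)) {a b : Tm F}
      (h : ReflTransGen Beta a b) : ReflTransGen Beta (f a) (f b) :=
    ReflTransGen.lift f hf a b h
  induction h with
  | refl t => rfl
  | lam _ ih => exact congr_beta _ (fun _ _ => Beta.lam) ih
  | app _ _ ih₁ ih₂ =>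
    exact (congr_beta _ (fun _ _ => Beta.appL _) ih₁).trans
      (congr_beta _ (fun _ _ => Beta.appR _) ih₂)
  | @beta a a' b b' _ _ ih₁ ih₂ =>
    exact ((congr_beta _ (fun _ _ => Beta.appL _) (congr_beta _ (fun _ _ => Beta.lam) ih₁)).trans
      (congr_beta _ (fun _ _ => Beta.appR _) ih₂)).tail (Beta.beta a' b')

theorem lam_inv {s u : Tm F} (h : PB (Tm.lam s) u) : ∃ s', u = Tm.lam s' ∧ PB s s' := by
  cases h with
  | refl => exact ⟨s, rfl, refl s⟩
  | lam h => exact ⟨_, rfl, h⟩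

end PB

def Tm.develop : Tm F → Tm F
  | .const f => .const f
  | .var n => .var n
  | .app (.lam s) t => subst (develop s) 0 (develop t)
  | .app s t => .app (develop s) (develop t)
  | .lam s => .lam (develop s)

namespace PB

theorem develop_self (t : Tm F) : PB t t.develop := by
  induction t with
  | const f => exact refl _
  | var n => exact refl _
  | lam s ih => exact lam ih
  | app s t ihs iht =>
    cases s with
    | lam b =>
      obtain ⟨_, hb, hbd⟩ := lam_inv ihs
      cases hb
      exact beta hbd iht
    | _ => exact app ihs iht

theorem develop {t u : Tm F} (h : PB t u) : PB u t.develop := by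
  induction h with
  | refl t => exact develop_self t
  | lam _ ih => exact lam ih
  | @app s s' t t' h₁ _ ih₁ ih₂ =>
    cases s with
    | lam b =>
      obtain ⟨_, rfl, _⟩ := lam_inv h₁
      obtain ⟨_, hb, hbd⟩ := lam_inv ih₁
      cases hb
      exact beta hbd ih₂
    | _ => exact app ih₁ ih₂
  | beta _ _ ih₁ ih₂ => exact ih₁.subst ih₂ 0

theorem diamond {t u v : Tm F} (hu : PB t u) (hv : PB t v) : ∃ w, PB u w ∧ PB v w :=
  ⟨t.develop, hu.develop, hv.develop⟩

end PB

theorem reflTransGen_pb_eq_beta : ReflTransGen (@PB F) = ReflTransGen Beta :=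
  le_antisymm (reflTransGen_closed fun _ _ => PB.reflTransGen_beta)
    (ReflTransGen.mono fun _ _ => PB.of_beta)

theorem Beta.church_rosser {s t u : Tm F} (ht : ReflTransGen Beta s t)
    (hu : ReflTransGen Beta s u) : Join (ReflTransGen Beta) t u := by
  rw [← reflTransGen_pb_eq_beta] at ht hu ⊢
  refine Relation.church_rosser (fun _ _ _ hb hc => ?_) ht hu
  obtain ⟨w, hbw, hcw⟩ := PB.diamond hb hc
  exact ⟨w, .single hbw, .single hcw⟩

theorem WN.of_reflTransGen {s t : Tm F} (hs : WN s) (h : ReflTransGen Beta s t) : WN t := by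
  obtain ⟨n, hsn, hn⟩ := hs
  obtain ⟨m, hnm, htm⟩ := Beta.church_rosser hsn h
  rw [(reflTransGen_iff_eq hn).1 hnm] at htm
  exact ⟨n, htm, hn⟩

theorem Head.beta_step {s t : Tm F} (h : Head s t) : Beta s t := by
  induction h with
  | beta s t => exact .beta s t
  | app t _ _ ih => exact .appL t ih
  | lam _ ih => exact .lam ih

namespace Tm

def rename (ρ : ℕ → ℕ) (t : Tm F) : Tm F := applySubst (fun n => var (ρ n)) t

def up (ρ : ℕ → ℕ) : ℕ → ℕ
  | 0 => 0
  | m + 1 => ρ m + 1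

/-- `up` iterated `k` times, in closed form. -/
def upBy (k : ℕ) (ρ : ℕ → ℕ) (n : ℕ) : ℕ := if n < k then n else ρ (n - k) + k

theorem up_upBy (k : ℕ) (ρ : ℕ → ℕ) : up (upBy k ρ) = upBy (k + 1) ρ := by
  funext n
  cases n with
  | zero => simp [up, upBy]
  | succ m => simp only [up, upBy]; split_ifs <;> grind

theorem upBy_zero (ρ : ℕ → ℕ) : upBy 0 ρ = ρ := by
  funext n
  simp [upBy]

@[simp] theorem rename_var (ρ : ℕ → ℕ) (n : ℕ) : rename ρ (var n : Tm F) = var (ρ n) := rfl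

@[simp] theorem rename_app (ρ : ℕ → ℕ) (s t : Tm F) :
    rename ρ (app s t) = app (rename ρ s) (rename ρ t) := rfl

@[simp] theorem rename_lam (ρ : ℕ → ℕ) (s : Tm F) :
    rename ρ (lam s) = lam (rename (up ρ) s) := by
  simp only [rename, applySubst]
  congr 2
  funext n
  cases n <;> rfl

theorem lift_rename (u : Tm F) (ρ : ℕ → ℕ) (d : ℕ) :
    lift d (rename (upBy d ρ) u) = rename (upBy (d + 1) ρ) (lift d u) := by
  induction u generalizing d with
  | const f => rfl
  | var n => simp only [rename_var, lift, upBy]; split_ifs <;> grind [lift, rename_var, upBy]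
  | app s t ihs iht => simp [lift, ihs, iht]
  | lam s ih => simp [lift, up_upBy, ih]

theorem lift_zero_rename (u : Tm F) (ρ : ℕ → ℕ) :
    lift 0 (rename ρ u) = rename (up ρ) (lift 0 u) := by
  simpa [upBy_zero, ← up_upBy] using lift_rename u ρ 0

theorem rename_subst (s u : Tm F) (ρ : ℕ → ℕ) (k : ℕ) :
    rename (upBy k ρ) (subst s k u) = subst (rename (upBy (k + 1) ρ) s) k (rename (upBy k ρ) u) := by
  induction s generalizing u k with
  | const f => rfl
  | var n => simp only [subst, rename_var, upBy]; split_ifs <;> grind [subst, rename_var, upBy]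
  | app s t ihs iht => simp [subst, ihs, iht]
  | lam s ih => simp [subst, up_upBy, ih, lift_zero_rename]

theorem rename_subst_zero (s u : Tm F) (ρ : ℕ → ℕ) :
    rename ρ (subst s 0 u) = subst (rename (up ρ) s) 0 (rename ρ u) := by
  simpa [upBy_zero, ← up_upBy] using rename_subst s u ρ 0

end Tm

theorem Beta.rename {s t : Tm F} (h : Beta s t) (ρ : ℕ → ℕ) :
    Beta (Tm.rename ρ s) (Tm.rename ρ t) := by
  induction h generalizing ρ with
  | beta s t => simpa [rename_subst_zero] using Beta.beta _ _
  | appL t _ ih => exact .appL _ (ih ρ)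
  | appR s _ ih => exact .appR _ (ih ρ)
  | lam _ ih => simpa using Beta.lam (ih (up ρ))

theorem Beta.exists_of_rename {t u : Tm F} {ρ : ℕ → ℕ} (h : Beta (Tm.rename ρ t) u) :
    ∃ t', Beta t t' := by
  induction t generalizing ρ u with
  | const f => cases h
  | var n => cases h
  | app s t ihs iht =>
    rw [rename_app] at h
    generalize hs : Tm.rename ρ s = s' at h
    cases h with
    | beta a b =>
      cases s with
      | lam s₀ => exact ⟨_, .beta s₀ t⟩
      | _ => simp [Tm.rename, applySubst] at hs
    | appL _ h =>
      obtain ⟨s', hs'⟩ := ihs (hs ▸ h)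
      exact ⟨_, .appL t hs'⟩
    | appR _ h =>
      obtain ⟨t', ht'⟩ := iht h
      exact ⟨_, .appR s ht'⟩
  | lam s ih =>
    rw [rename_lam] at h
    cases h with
    | lam h =>
      obtain ⟨s', hs'⟩ := ih h
      exact ⟨_, .lam hs'⟩

theorem BetaNF.rename {t : Tm F} (h : BetaNF t) (ρ : ℕ → ℕ) : BetaNF (Tm.rename ρ t) :=
  fun _ hu => let ⟨_, ht⟩ := Beta.exists_of_rename hu; h _ ht

theorem WN.rename {t : Tm F} (h : WN t) (ρ : ℕ → ℕ) : WN (Tm.rename ρ t) := by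
  obtain ⟨n, htn, hn⟩ := h
  exact ⟨_, ReflTransGen.lift _ (fun _ _ hb => hb.rename ρ) _ _ htn, hn.rename ρ⟩

def HasAtomicHead (t : Tm F) : Prop :=
  (∃ n : ℕ, spineHead t = Tm.var n) ∨ (∃ f : F, spineHead t = Tm.const f)

theorem not_hasAtomicHead_lam (s : Tm F) : ¬ HasAtomicHead (Tm.lam s) := by
  simp [HasAtomicHead, spineHead]

def ArgsReduce (s u : Tm F) : Prop :=
  ∀ a ∈ spineArgs s, ∃ b ∈ spineArgs u, ReflTransGen Beta a b

theorem ArgsReduce.refl (s : Tm F) : ArgsReduce s s :=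
  fun a ha => ⟨a, ha, .refl⟩

theorem ArgsReduce.trans {s t u : Tm F} (hst : ArgsReduce s t) (htu : ArgsReduce t u) :
    ArgsReduce s u := fun a ha =>
  let ⟨b, hb, hab⟩ := hst a ha
  let ⟨c, hc, hbc⟩ := htu b hb
  ⟨c, hc, hab.trans hbc⟩

theorem Beta.hasAtomicHead {s u : Tm F} (h : Beta s u) (hs : HasAtomicHead s) :
    HasAtomicHead u ∧ ArgsReduce s u := by
  induction h with
  | beta a b => exact absurd hs (not_hasAtomicHead_lam a)
  | appL q _ ih =>
    obtain ⟨hp, hargs⟩ := ih hs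
    refine ⟨hp, fun a ha => ?_⟩
    simp only [spineArgs, List.mem_append, List.mem_singleton] at ha ⊢
    rcases ha with ha | rfl
    · obtain ⟨b, hb, hab⟩ := hargs a ha
      exact ⟨b, .inl hb, hab⟩
    · exact ⟨a, .inr rfl, .refl⟩
  | appR p h =>
    refine ⟨hs, fun a ha => ?_⟩
    simp only [spineArgs, List.mem_append, List.mem_singleton] at ha ⊢
    rcases ha with ha | rfl
    · exact ⟨a, .inl ha, .refl⟩
    · exact ⟨_, .inr rfl, .single h⟩
  | lam _ => exact absurd hs (not_hasAtomicHead_lam _)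

theorem Beta.hasAtomicHead_stripLam {s u : Tm F} (h : Beta s u)
    (hs : HasAtomicHead (stripLam s)) :
    HasAtomicHead (stripLam u) ∧ ArgsReduce (stripLam s) (stripLam u) := by
  induction h with
  | beta a b => exact absurd hs (not_hasAtomicHead_lam a)
  | appL q h => exact (Beta.appL q h).hasAtomicHead hs
  | appR p h => exact (Beta.appR p h).hasAtomicHead hs
  | lam _ ih => exact ih hs

theorem hasAtomicHead_stripLam_of_reflTransGen {s u : Tm F} (h : ReflTransGen Beta s u)
    (hs : HasAtomicHead (stripLam s)) :
    HasAtomicHead (stripLam u) ∧ ArgsReduce (stripLam s) (stripLam u) := by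
  induction h with
  | refl => exact ⟨hs, .refl _⟩
  | tail _ htu ih =>
    obtain ⟨ht, hst⟩ := ih
    obtain ⟨hu, htu⟩ := htu.hasAtomicHead_stripLam ht
    exact ⟨hu, hst.trans htu⟩

theorem BetaNF.stripLam {t : Tm F} (h : BetaNF t) : BetaNF (stripLam t) := by
  induction t with
  | lam s ih => exact ih fun u hu => h _ (.lam hu)
  | _ => exact h

theorem BetaNF.of_mem_spineArgs {t a : Tm F} (h : BetaNF t) (ha : a ∈ spineArgs t) :
    BetaNF a := by
  induction t with
  | app s u ihs =>
    simp only [spineArgs, List.mem_append, List.mem_singleton] at ha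
    rcases ha with ha | rfl
    · exact ihs (fun v hv => h _ (.appL _ hv)) ha
    · exact fun v hv => h _ (.appR _ hv)
  | _ => simp [spineArgs] at ha

theorem WN.of_mem_spineArgs {s a : Tm F} (hs : WN s) (hhead : HasAtomicHead (stripLam s))
    (ha : a ∈ spineArgs (stripLam s)) : WN a := by
  obtain ⟨n, hsn, hn⟩ := hs
  obtain ⟨b, hb, hab⟩ := (hasAtomicHead_stripLam_of_reflTransGen hsn hhead).2 a ha
  exact ⟨b, hab, hn.stripLam.of_mem_spineArgs hb⟩

/-- the set of weakly beta-normalizing terms is closed under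
`≻`. -/
theorem wn_closed_succ {F : Type} {s t : Tm F} (hs : WN s) (h : Succ s t) :
    WN t := by
  cases h with
  | head h => exact hs.of_reflTransGen (.single h.beta_step)
  | arg hhead ha _ hren =>
    obtain ⟨ρ, rfl⟩ := hren
    exact (hs.of_mem_spineArgs hhead ha).rename ρ

end CondConf
end

section
/- For a semi-closed left-linear right-applicative conditional system, one-step lifting of rule instances across parallel beta: if →_{A_{i-1}}* commutes with →β*, d⃗=c⃗ ⊃ l→r is a rule, and u ⇐β lσ →_{A_i} rσ, then there is a substitution σ' with u = lσ', lσ' →_{A_i} rσ', and rσ' ⇐β rσ. -/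
namespace CondConf

/-- Algebraic terms: no abstraction and no applied variable. -/
inductive Alg {F : Type} : Tm F → Prop
  | const (f : F) : Alg (Tm.const f)
  | var (n : ℕ) : Alg (Tm.var n)
  | app {s t} : Alg s → Alg t → (∀ n : ℕ, s ≠ Tm.var n) → Alg (Tm.app s t)

/-- A conditional rewrite rule `d⃗ = c⃗ ⊃ l → r`. -/
structure Rule (F : Type) where
  lhs : Tm F
  rhs : Tm F
  conds : List (Tm F × Tm F)

/-- Joinability for a relation: `a ↓ b` iff `a →* c ←* b` for some `c`. -/
def Joinable {α : Type*} (r : α → α → Prop) (a b : α) : Prop :=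
  ∃ c : α, Relation.ReflTransGen r a c ∧ Relation.ReflTransGen r b c

/-- Closure of a relation under the term formation rules (contexts). -/
inductive Ctx {F : Type} (base : Tm F → Tm F → Prop) : Tm F → Tm F → Prop
  | base {s t} : base s t → Ctx base s t
  | appL {s s'} (t) : Ctx base s s' → Ctx base (Tm.app s t) (Tm.app s' t)
  | appR (s) {t t'} : Ctx base t t' → Ctx base (Tm.app s t) (Tm.app s t')
  | lam {s s'} : Ctx base s s' → Ctx base (Tm.lam s) (Tm.lam s')

/-- Root rewrite steps: rule instances whose instantiated conditions are
joinable for the relation `prev`. -/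
def Aroot {F : Type} (R : Set (Rule F)) (prev : Tm F → Tm F → Prop)
    (s t : Tm F) : Prop :=
  ∃ ru ∈ R, ∃ σ : ℕ → Tm F,
    s = applySubst σ ru.lhs ∧ t = applySubst σ ru.rhs ∧
    ∀ dc ∈ ru.conds, Joinable prev (applySubst σ dc.1) (applySubst σ dc.2)

/-- The level-`i` standard conditional rewrite relation `→_{A_i}`
(`→_{A_0} = ∅`, conditions at level `i+1` checked by `→_{A_i}`-joinability). -/
def Alevel {F : Type} (R : Set (Rule F)) : ℕ → Tm F → Tm F → Prop
  | 0 => fun _ _ => False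
  | i + 1 => Ctx (Aroot R (Alevel R i))

/-- The nested parallel conditional rewrite relation `⇒_{A_i}`: smallest
reflexive parallel relation closed under abstraction, parallel application and
the rule `lσ ⇒_{A_i} rτ` whenever `lσ →_{A_i} rσ` and `σ ⇒_{A_i} τ`. -/
inductive APar {F : Type} (R : Set (Rule F)) (i : ℕ) : Tm F → Tm F → Prop
  | refl (t : Tm F) : APar R i t t
  | app {s s' t t'} : APar R i s s' → APar R i t t' →
      APar R i (Tm.app s t) (Tm.app s' t')
  | lam {s s'} : APar R i s s' → APar R i (Tm.lam s) (Tm.lam s')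
  | rule {ru : Rule F} {σ τ : ℕ → Tm F} : ru ∈ R →
      Alevel R i (applySubst σ ru.lhs) (applySubst σ ru.rhs) →
      (∀ n : ℕ, APar R i (σ n) (τ n)) →
      APar R i (applySubst σ ru.lhs) (applySubst τ ru.rhs)

/-- Applicative terms: no abstraction. -/
def Applicative {F : Type} : Tm F → Prop
  | .const _ => True
  | .var _ => True
  | .app s t => Applicative s ∧ Applicative t
  | .lam _ => False

/-- Number of occurrences of the free variable (de Bruijn index) `n`. -/
def fvCount {F : Type} : Tm F → ℕ → ℕ
  | .const _, _ => 0
  | .var m, n => if m = n then 1 else 0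
  | .app s t, n => fvCount s n + fvCount t n
  | .lam s, n => fvCount s (n + 1)

/-- Linear terms: every free variable occurs at most once. -/
def Linear {F : Type} (t : Tm F) : Prop := ∀ n : ℕ, fvCount t n ≤ 1

/-- Closed terms: no free variable. -/
def Closed {F : Type} (t : Tm F) : Prop := ∀ n : ℕ, fvCount t n = 0

/-- A semi-closed, left-linear, right-applicative conditional rewrite system:
left-hand sides are non-variable linear algebraic terms, right-hand sides are
applicative, the `cᵢ` are closed algebraic terms, and all free variables of
`d⃗, c⃗, r` occur in `l`. -/
def SemiClosedLLRA {F : Type} (R : Set (Rule F)) : Prop :=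
  ∀ ru ∈ R,
    Alg ru.lhs ∧ (∀ n : ℕ, ru.lhs ≠ Tm.var n) ∧ Linear ru.lhs ∧
    Applicative ru.rhs ∧
    (∀ dc ∈ ru.conds, Alg dc.2 ∧ Closed dc.2) ∧
    (∀ n : ℕ, 0 < fvCount ru.rhs n → 0 < fvCount ru.lhs n) ∧
    (∀ dc ∈ ru.conds, ∀ n : ℕ,
      0 < fvCount dc.1 n + fvCount dc.2 n → 0 < fvCount ru.lhs n)

/-- The standard conditional rewrite relation `→_A = ∪ᵢ →_{A_i}`. -/
def ARel {F : Type} (R : Set (Rule F)) (s t : Tm F) : Prop :=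
  ∃ i : ℕ, Alevel R i s t

section Aux

variable {F : Type}

theorem lift_lift (u : Tm F) : ∀ e d, e ≤ d →
    Tm.lift (d + 1) (Tm.lift e u) = Tm.lift e (Tm.lift d u) := by
  induction u with
  | const f => intros; rfl
  | var n =>
      intro e d h
      simp only [Tm.lift]
      split_ifs <;> simp only [Tm.lift] <;> split_ifs <;> first | rfl | omega
  | app s t ihs iht => intro e d h; simp only [Tm.lift, ihs e d h, iht e d h]
  | lam s ih => intro e d h; simp only [Tm.lift, ih (e+1) (d+1) (by omega)]

theorem lift_subst (s : Tm F) : ∀ (u : Tm F) (k d : ℕ), k ≤ d →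
    Tm.lift d (Tm.subst s k u) = Tm.subst (Tm.lift (d + 1) s) k (Tm.lift d u) := by
  induction s with
  | const f => intros; rfl
  | var n =>
      intro u k d h
      simp only [Tm.subst, Tm.lift]
      split_ifs <;> simp only [Tm.subst, Tm.lift] <;> split_ifs <;>
        first | rfl | omega | (congr 1; omega)
  | app a b iha ihb => intro u k d h; simp only [Tm.subst, Tm.lift, iha u k d h, ihb u k d h]
  | lam a ih =>
      intro u k d h
      simp only [Tm.subst, Tm.lift, ih (Tm.lift 0 u) (k+1) (d+1) (by omega),
        lift_lift u 0 d (by omega)]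

theorem PB.lift' {s t : Tm F} (h : PB s t) : ∀ d, PB (Tm.lift d s) (Tm.lift d t) := by
  induction h with
  | refl t => intro d; exact PB.refl _
  | lam _ ih => intro d; exact PB.lam (ih (d+1))
  | app _ _ ihs iht => intro d; exact PB.app (ihs d) (iht d)
  | @beta s s' t t' _ _ ihs iht =>
      intro d
      have := PB.beta (ihs (d+1)) (iht d)
      simpa only [Tm.lift, lift_subst s' t' 0 d (Nat.zero_le d)] using this

theorem applySubst_PB : ∀ (t : Tm F) {σ σ' : ℕ → Tm F}, (∀ n, PB (σ n) (σ' n)) →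
    PB (applySubst σ t) (applySubst σ' t) := by
  intro t
  induction t with
  | const f => intro σ σ' h; exact PB.refl _
  | var n => intro σ σ' h; exact h n
  | app s t ihs iht => intro σ σ' h; exact PB.app (ihs h) (iht h)
  | lam s ih =>
      intro σ σ' h
      refine PB.lam (ih ?_)
      intro n
      cases n with
      | zero => exact PB.refl _
      | succ m => exact PB.lift' (h m) 0

theorem rtg_appL {s s' : Tm F} (t : Tm F) (h : Relation.ReflTransGen Beta s s') :
    Relation.ReflTransGen Beta (Tm.app s t) (Tm.app s' t) := by
  induction h with
  | refl => exact .refl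
  | tail _ hbc ih => exact ih.tail (Beta.appL t hbc)

theorem rtg_appR (s : Tm F) {t t' : Tm F} (h : Relation.ReflTransGen Beta t t') :
    Relation.ReflTransGen Beta (Tm.app s t) (Tm.app s t') := by
  induction h with
  | refl => exact .refl
  | tail _ hbc ih => exact ih.tail (Beta.appR s hbc)

theorem rtg_lam {s s' : Tm F} (h : Relation.ReflTransGen Beta s s') :
    Relation.ReflTransGen Beta (Tm.lam s) (Tm.lam s') := by
  induction h with
  | refl => exact .refl
  | tail _ hbc ih => exact ih.tail (Beta.lam hbc)

theorem PB.toBetaStar {s t : Tm F} (h : PB s t) : Relation.ReflTransGen Beta s t := by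
  induction h with
  | refl t => exact .refl
  | lam _ ih => exact rtg_lam ih
  | app _ _ ihs iht => exact (rtg_appL _ ihs).trans (rtg_appR _ iht)
  | beta _ _ ihs iht =>
      exact ((rtg_appL _ (rtg_lam ihs)).trans (rtg_appR _ iht)).tail (Beta.beta _ _)

theorem Alg.applicative {t : Tm F} (h : Alg t) : Applicative t := by
  induction h with
  | const f => trivial
  | var n => trivial
  | app _ _ _ ihs iht => exact ⟨ihs, iht⟩

theorem applySubst_congr {σ σ' : ℕ → Tm F} :
    ∀ {t : Tm F}, Applicative t → (∀ n, 0 < fvCount t n → σ n = σ' n) →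
    applySubst σ t = applySubst σ' t := by
  intro t
  induction t with
  | const f => intros; rfl
  | var n => intro _ h; exact h n (by simp [fvCount])
  | app s t ihs iht =>
      intro ha h
      exact congrArg₂ Tm.app
        (ihs ha.1 fun n hn => h n (by simp only [fvCount]; omega))
        (iht ha.2 fun n hn => h n (by simp only [fvCount]; omega))
  | lam s ih => intro ha; exact absurd ha (by simp [Applicative])

theorem applicative_applySubst {σ : ℕ → Tm F} :
    ∀ {t : Tm F}, Applicative t → (∀ n, 0 < fvCount t n → Applicative (σ n)) →
    Applicative (applySubst σ t) := by
  intro t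
  induction t with
  | const f => intros; trivial
  | var n => intro _ h; exact h n (by simp [fvCount])
  | app s t ihs iht =>
      intro ha h
      exact ⟨ihs ha.1 fun n hn => h n (by simp only [fvCount]; omega),
             iht ha.2 fun n hn => h n (by simp only [fvCount]; omega)⟩
  | lam s ih => intro ha; exact absurd ha (by simp [Applicative])

theorem applicative_of_applySubst {σ : ℕ → Tm F} :
    ∀ {t : Tm F}, Applicative t → Applicative (applySubst σ t) →
    ∀ n, 0 < fvCount t n → Applicative (σ n) := by
  intro t
  induction t with
  | const f => intro _ _ n hn; simp [fvCount] at hn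
  | var m =>
      intro _ h n hn
      have : n = m := by by_contra hne; simp [fvCount, Ne.symm hne] at hn
      exact this ▸ h
  | app s t ihs iht =>
      intro ha h n hn
      simp only [fvCount] at hn
      rcases Nat.lt_or_ge 0 (fvCount s n) with h1 | h1
      · exact ihs ha.1 h.1 n h1
      · exact iht ha.2 h.2 n (by omega)
  | lam s ih => intro ha; exact absurd ha (by simp [Applicative])

theorem closed_applySubst {σ : ℕ → Tm F} :
    ∀ {t : Tm F}, Applicative t → (∀ n, 0 < fvCount t n → Closed (σ n)) →
    Closed (applySubst σ t) := by
  intro t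
  induction t with
  | const f => intro _ _ n; rfl
  | var n => intro _ h; exact h n (by simp [fvCount])
  | app s t ihs iht =>
      intro ha h m
      have h1 := ihs ha.1 (fun n hn => h n (by simp only [fvCount]; omega)) m
      have h2 := iht ha.2 (fun n hn => h n (by simp only [fvCount]; omega)) m
      simp only [applySubst, fvCount]
      omega
  | lam s ih => intro ha; exact absurd ha (by simp [Applicative])

theorem closed_of_applySubst {σ : ℕ → Tm F} :
    ∀ {t : Tm F}, Applicative t → Closed (applySubst σ t) →
    ∀ n, 0 < fvCount t n → Closed (σ n) := by
  intro t
  induction t with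
  | const f => intro _ _ n hn; simp [fvCount] at hn
  | var m =>
      intro _ h n hn
      have : n = m := by by_contra hne; simp [fvCount, Ne.symm hne] at hn
      exact this ▸ h
  | app s t ihs iht =>
      intro ha h n hn
      have hs : Closed (applySubst σ s) := by
        intro m; have := h m; simp only [applySubst, fvCount] at this; omega
      have ht : Closed (applySubst σ t) := by
        intro m; have := h m; simp only [applySubst, fvCount] at this; omega
      simp only [fvCount] at hn
      rcases Nat.lt_or_ge 0 (fvCount s n) with h1 | h1
      · exact ihs ha.1 hs n h1
      · exact iht ha.2 ht n (by omega)
  | lam s ih => intro ha; exact absurd ha (by simp [Applicative])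

theorem applicative_no_beta {s t : Tm F} (h : Beta s t) : Applicative s → False := by
  induction h with
  | beta s t => intro ha; exact ha.1
  | appL t _ ih => intro ha; exact ih ha.1
  | appR s _ ih => intro ha; exact ih ha.2
  | lam _ ih => intro ha; exact ha

theorem rtg_beta_applicative_eq {s t : Tm F} (h : Relation.ReflTransGen Beta s t)
    (ha : Applicative s) : t = s := by
  rcases h.cases_head with rfl | ⟨c, hc, _⟩
  · rfl
  · exact absurd ha (applicative_no_beta hc)

theorem closed_app {s t : Tm F} (h : Closed (Tm.app s t)) : Closed s ∧ Closed t := by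
  constructor <;> intro m <;> (have := h m; simp only [fvCount] at this; omega)

theorem alevel_preserves {R : Set (Rule F)} (hR : SemiClosedLLRA R) :
    ∀ {i : ℕ} {s t : Tm F}, Alevel R i s t →
      Applicative s ∧ Closed s → Applicative t ∧ Closed t := by
  intro i
  cases i with
  | zero => intro s t h; exact absurd h (by simp [Alevel])
  | succ j =>
      intro s t h
      induction h with
      | base hb =>
          obtain ⟨ru, hru, σ, rfl, rfl, _⟩ := hb
          obtain ⟨hAlg, _, _, happR, _, hfvR, _⟩ := hR ru hru
          intro ⟨hsA, hsC⟩
          have hA : ∀ n, 0 < fvCount ru.lhs n → Applicative (σ n) :=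
            applicative_of_applySubst hAlg.applicative hsA
          have hC : ∀ n, 0 < fvCount ru.lhs n → Closed (σ n) :=
            closed_of_applySubst hAlg.applicative hsC
          exact ⟨applicative_applySubst happR (fun n hn => hA n (hfvR n hn)),
                 closed_applySubst happR (fun n hn => hC n (hfvR n hn))⟩
      | appL t _ ih =>
          intro ⟨hsA, hsC⟩
          obtain ⟨hc1, hc2⟩ := closed_app hsC
          obtain ⟨hA', hC'⟩ := ih ⟨hsA.1, hc1⟩
          exact ⟨⟨hA', hsA.2⟩, fun m => by
            have := hc2 m; have := hC' m; simp only [fvCount]; omega⟩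
      | appR s _ ih =>
          intro ⟨hsA, hsC⟩
          obtain ⟨hc1, hc2⟩ := closed_app hsC
          obtain ⟨hA', hC'⟩ := ih ⟨hsA.2, hc2⟩
          exact ⟨⟨hsA.1, hA'⟩, fun m => by
            have := hc1 m; have := hC' m; simp only [fvCount]; omega⟩
      | lam _ ih => intro ⟨hsA, _⟩; exact absurd hsA (by simp [Applicative])

theorem pb_app_inv {a b u : Tm F} (hna : ∀ s, a ≠ Tm.lam s) (h : PB (Tm.app a b) u) :
    u = Tm.app a b ∨ ∃ a' b', u = Tm.app a' b' ∧ PB a a' ∧ PB b b' := by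
  cases h with
  | refl => exact Or.inl rfl
  | app h1 h2 => exact Or.inr ⟨_, _, rfl, h1, h2⟩
  | beta h1 h2 => exact absurd rfl (hna _)

theorem alg_applySubst_not_lam {s : Tm F} (hs : Alg s) (hnv : ∀ n, s ≠ Tm.var n)
    (σ : ℕ → Tm F) : ∀ w, applySubst σ s ≠ Tm.lam w := by
  cases hs with
  | const f => intro w h; simp [applySubst] at h
  | var n => exact absurd rfl (hnv n)
  | app _ _ _ => intro w h; simp [applySubst] at h

theorem pb_inv_alg : ∀ {l : Tm F}, Alg l → Linear l → ∀ {σ : ℕ → Tm F} {u : Tm F},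
    PB (applySubst σ l) u →
    ∃ σ' : ℕ → Tm F, u = applySubst σ' l ∧ (∀ n, PB (σ n) (σ' n)) := by
  intro l hA
  induction hA with
  | const f =>
      intro _ σ u hpb
      simp only [applySubst] at hpb
      cases hpb
      exact ⟨σ, rfl, fun n => PB.refl _⟩
  | var n =>
      intro _ σ u hpb
      simp only [applySubst] at hpb
      refine ⟨fun m => if m = n then u else σ m, by simp [applySubst], ?_⟩
      intro m
      dsimp only
      split_ifs with h
      · rw [h]; exact hpb
      · exact PB.refl _
  | @app s t hs ht hnv ihs iht =>
      intro hlin σ u hpb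
      have hlins : Linear s := fun n => by
        have := hlin n; simp only [fvCount] at this; omega
      have hlint : Linear t := fun n => by
        have := hlin n; simp only [fvCount] at this; omega
      have hdisj : ∀ n, 0 < fvCount s n → fvCount t n = 0 := fun n h => by
        have := hlin n; simp only [fvCount] at this; omega
      simp only [applySubst] at hpb
      rcases pb_app_inv (alg_applySubst_not_lam hs hnv σ) hpb with rfl | ⟨a', b', rfl, hps, hpt⟩
      · exact ⟨σ, by simp [applySubst], fun n => PB.refl _⟩
      · obtain ⟨σ₁, rfl, h1⟩ := ihs hlins hps
        obtain ⟨σ₂, rfl, h2⟩ := iht hlint hpt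
        refine ⟨fun n => if 0 < fvCount s n then σ₁ n else σ₂ n, ?_, ?_⟩
        · simp only [applySubst]
          congr 1
          · exact applySubst_congr hs.applicative (fun n hn => by simp [hn])
          · refine applySubst_congr ht.applicative (fun n hn => ?_)
            have h0 : ¬ 0 < fvCount s n := fun hs0 => by
              have := hdisj n hs0; omega
            simp [h0]
        · intro n
          dsimp only
          split_ifs
          · exact h1 n
          · exact h2 n

end Aux

/-- one-step lifting of rule instances across parallel beta.
For a semi-closed, left-linear, right-applicative system, if `→_{A_i}*`
commutes with `→β*`, `d⃗ = c⃗ ⊃ l → r` is a rule whose conditions are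
`→_{A_i}`-joinable under `σ` (so that `lσ →_{A_{i+1}} rσ`), and
`u ⇐β lσ`, then `u = lσ'` with `lσ' →_{A_{i+1}} rσ'` and `rσ' ⇐β rσ`. -/
theorem rule_instance_lifting {F : Type} (R : Set (Rule F))
    (hR : SemiClosedLLRA R) (i : ℕ)
    (hcomm : ∀ s t u : Tm F, Relation.ReflTransGen (Alevel R i) s t →
      Relation.ReflTransGen Beta s u →
      ∃ v : Tm F, Relation.ReflTransGen Beta t v ∧
        Relation.ReflTransGen (Alevel R i) u v)
    {ru : Rule F} (hru : ru ∈ R) {σ : ℕ → Tm F} {u : Tm F}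
    (hconds : ∀ dc ∈ ru.conds,
      Joinable (Alevel R i) (applySubst σ dc.1) (applySubst σ dc.2))
    (hpb : PB (applySubst σ ru.lhs) u) :
    ∃ σ' : ℕ → Tm F, u = applySubst σ' ru.lhs ∧
      Alevel R (i + 1) (applySubst σ' ru.lhs) (applySubst σ' ru.rhs) ∧
      PB (applySubst σ ru.rhs) (applySubst σ' ru.rhs) := by
  obtain ⟨hAlg, hnv, hlin, happR, hcAlg, hfvR, hfvC⟩ := hR ru hru
  obtain ⟨σ', rfl, hσ⟩ := pb_inv_alg hAlg hlin hpb
  refine ⟨σ', rfl, ?_, applySubst_PB ru.rhs hσ⟩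
  refine Ctx.base ⟨ru, hru, σ', rfl, rfl, ?_⟩
  intro dc hdc
  obtain ⟨e, hde, hce⟩ := hconds dc hdc
  obtain ⟨v, hev, hdv⟩ := hcomm _ _ _ hde (applySubst_PB dc.1 hσ).toBetaStar
  obtain ⟨hcA, hcC⟩ := hcAlg dc hdc
  have hceq : applySubst σ' dc.2 = applySubst σ dc.2 := by
    refine applySubst_congr hcA.applicative (fun n hn => ?_)
    exact absurd (hcC n) (by omega)
  have hcσ : Applicative (applySubst σ dc.2) ∧ Closed (applySubst σ dc.2) :=
    ⟨applicative_applySubst hcA.applicative (fun n hn => absurd (hcC n) (by omega)),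
     closed_applySubst hcA.applicative (fun n hn => absurd (hcC n) (by omega))⟩
  have heA : Applicative e ∧ Closed e := by
    have key : ∀ {a b : Tm F}, Relation.ReflTransGen (Alevel R i) a b →
        Applicative a ∧ Closed a → Applicative b ∧ Closed b := by
      intro a b h
      induction h with
      | refl => exact id
      | tail _ hst ih => intro ha; exact alevel_preserves hR hst (ih ha)
    exact key hce hcσ
  have hv : v = e := rtg_beta_applicative_eq hev heA.1
  exact ⟨e, hv ▸ hdv, by rw [hceq]; exact hce⟩

end CondConf
end
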